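/- arXiv:1310.1845 — 3 statements merged into one kernel-verified Lean document; each statement's English description precedes it below -/
import Mathlib

section
/- In an outer-face-rooted spanning forest of height k-1 of a planar embedded graph, every vertex at distance i from its root lies in one of the onion peels L_1, ..., L_{i+1}. -/
open Set Topology

/-- `A` is a simple arc from `p` to `q` in the plane. -/
def IsArc (A : Set (ℝ × ℝ)) (p q : ℝ × ℝ) : Prop :=
  ∃ f : ℝ → ℝ × ℝ, ContinuousOn f (Icc 0 1) ∧ InjOn f (Icc 0 1) ∧
    f 0 = p ∧ f 1 = q ∧ f '' Icc 0 1 = A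

/-- A (topological) planar drawing of a simple graph `G`: vertices are placed
injectively in the plane, every edge is drawn as a simple arc between the
positions of its endpoints, two distinct edges meet only in the positions of
their common endpoints, and no vertex lies on an arc except at its own edges. -/
structure PlanarDrawing {V : Type} (G : SimpleGraph V) : Type where
  pos : V → ℝ × ℝ
  pos_inj : Function.Injective pos
  arc : Sym2 V → Set (ℝ × ℝ)
  arc_isArc : ∀ e ∈ G.edgeSet, ∃ u v : V, e = s(u, v) ∧ IsArc (arc e) (pos u) (pos v)
  arc_inter_arc : ∀ e ∈ G.edgeSet, ∀ f ∈ G.edgeSet, e ≠ f →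
    arc e ∩ arc f ⊆ pos '' {v : V | v ∈ e ∧ v ∈ f}
  arc_pos : ∀ e ∈ G.edgeSet, ∀ v : V, pos v ∈ arc e → v ∈ e

namespace PlanarDrawing

variable {V : Type} {G : SimpleGraph V} (D : PlanarDrawing G)

/-- The set of points of the plane covered by the drawing. -/
def drawnSet : Set (ℝ × ℝ) := Set.range D.pos ∪ ⋃ e ∈ G.edgeSet, D.arc e

/-- The faces of the drawing: connected components of the complement. -/
def IsFace (F : Set (ℝ × ℝ)) : Prop :=
  ∃ x ∉ D.drawnSet, F = connectedComponentIn D.drawnSetᶜ x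

/-- The outer face: an unbounded face. -/
def IsOuterFace (F : Set (ℝ × ℝ)) : Prop := D.IsFace F ∧ ¬ Bornology.IsBounded F

/-- A vertex lies on the outer face. -/
def OnOuter (v : V) : Prop := ∃ F, D.IsOuterFace F ∧ D.pos v ∈ closure F

/-- A vertex is incident to a face if its position is in the closure of the face. -/
def Incident (v : V) (F : Set (ℝ × ℝ)) : Prop := D.pos v ∈ closure F

private lemma induce_edge_mem {S : Set V} {e : Sym2 ↥S}
    (he : e ∈ (G.induce S).edgeSet) : Sym2.map (Subtype.val) e ∈ G.edgeSet := by
  induction e using Sym2.ind with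
  | _ a b =>
    rw [Sym2.map_pair_eq, SimpleGraph.mem_edgeSet]
    simpa using he

/-- Restriction of a drawing to the subgraph induced on `S` (erase all other
vertices and edges, keep the rest of the drawing unchanged). -/
def restrict (S : Set V) : PlanarDrawing (G.induce S) where
  pos v := D.pos v.val
  pos_inj := D.pos_inj.comp Subtype.val_injective
  arc e := D.arc (Sym2.map Subtype.val e)
  arc_isArc := by
    intro e he
    induction e using Sym2.ind with
    | _ a b =>
      obtain ⟨u, v, huv, harc⟩ := D.arc_isArc _ (induce_edge_mem he)
      rw [Sym2.map_pair_eq] at huv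
      rw [Sym2.eq_iff] at huv
      rcases huv with ⟨h1, h2⟩ | ⟨h1, h2⟩
      · refine ⟨a, b, rfl, ?_⟩
        show IsArc (D.arc (Sym2.map Subtype.val s(a, b))) (D.pos ↑a) (D.pos ↑b)
        rw [← h1, ← h2] at harc; exact harc
      · refine ⟨b, a, Sym2.eq_swap, ?_⟩
        show IsArc (D.arc (Sym2.map Subtype.val s(a, b))) (D.pos ↑b) (D.pos ↑a)
        rw [← h1, ← h2] at harc; exact harc
  arc_inter_arc := by
    intro e he f hf hef x hx
    have hmapne : Sym2.map (Subtype.val : S → V) e ≠ Sym2.map Subtype.val f :=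
      fun h => hef (Sym2.map.injective Subtype.val_injective h)
    obtain ⟨w, ⟨hw1, hw2⟩, hwx⟩ :=
      D.arc_inter_arc _ (induce_edge_mem he) _ (induce_edge_mem hf) hmapne hx
    rw [Sym2.mem_map] at hw1 hw2
    obtain ⟨a, ha, rfl⟩ := hw1
    obtain ⟨b, hb, hba⟩ := hw2
    have : b = a := Subtype.val_injective hba
    subst this
    exact ⟨b, ⟨ha, hb⟩, hwx⟩
  arc_pos := by
    intro e he v hv
    have := D.arc_pos _ (induce_edge_mem he) v.val hv
    rw [Sym2.mem_map] at this
    obtain ⟨a, ha, hav⟩ := this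
    have : a = v := Subtype.val_injective hav
    subst this
    exact ha

/-- The vertices of `S` lying on the outer face of the drawing restricted to `S`. -/
def peelSet (S : Set V) : Set V :=
  {v : V | ∃ h : v ∈ S, (D.restrict S).OnOuter ⟨v, h⟩}

/-- The vertices remaining after `n` rounds of removing the outer-face vertices. -/
def remaining (D : PlanarDrawing G) : ℕ → Set V
  | 0 => Set.univ
  | n + 1 => remaining D n \ D.peelSet (remaining D n)

/-- The `(i+1)`-st onion peel `L_{i+1}` of the drawing. -/
def peel (i : ℕ) : Set V := D.peelSet (D.remaining i)

/-- A face is a triangle: bounded by the arcs of three mutually adjacent vertices. -/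
def IsTriangleFace (F : Set (ℝ × ℝ)) : Prop :=
  ∃ u v w : V, u ≠ v ∧ u ≠ w ∧ v ≠ w ∧ G.Adj u v ∧ G.Adj u w ∧ G.Adj v w ∧
    frontier F = D.arc s(u, v) ∪ D.arc s(u, w) ∪ D.arc s(v, w)

/-- A drawing is a triangulation if every face (including the outer one) is a triangle. -/
def IsTriangulation : Prop := ∀ F, D.IsFace F → D.IsTriangleFace F

/-- A triangulated disk: every inner (bounded) face is a triangle and the outer
face is bounded by a simple cycle of the graph. -/
def IsTriangulatedDisk : Prop :=
  (∀ F, D.IsFace F → Bornology.IsBounded F → D.IsTriangleFace F) ∧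
  ∀ F, D.IsOuterFace F → ∃ (v : V) (c : G.Walk v v), c.IsCycle ∧
    frontier F = ⋃ e ∈ c.edges, D.arc e

/-- `F` is an outer-face-rooted spanning forest of the drawn graph: a spanning
acyclic subgraph each of whose components contains exactly one outer-face vertex. -/
def IsOuterRootedForest (F : SimpleGraph V) : Prop :=
  F ≤ G ∧ F.IsAcyclic ∧ ∀ v : V, ∃! r : V, D.OnOuter r ∧ F.Reachable v r

/-- The forest has height at most `h`: every vertex is within distance `h` (in `F`)
of an outer-face vertex. -/
def ForestHeightLE (F : SimpleGraph V) (h : ℕ) : Prop :=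
  ∀ v : V, ∃ r : V, D.OnOuter r ∧ F.Reachable v r ∧ F.dist v r ≤ h

end PlanarDrawing

/-- `G` is `k`-outerplanar: it has a planar drawing with at most `k` onion peels. -/
def KOuterplanar {V : Type} (G : SimpleGraph V) (k : ℕ) : Prop :=
  ∃ D : PlanarDrawing G, D.remaining k = ∅

/-! If `u` lies on the outer face of the drawing of `T` and `v ∈ S ⊆ T \ {u}` is a neighbour of
`u`, then in the drawing of `S` the old outer face, the point `u` and the edge `uv` (without `v`)
lie in one unbounded face, whose closure contains `v`. Hence a neighbour of a vertex peeled within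
`n` rounds is peeled within `n + 1` rounds, and induction along the forest path to the root gives
the bound. -/

namespace IsArc

variable {A : Set (ℝ × ℝ)} {p q : ℝ × ℝ}

theorem symm (h : IsArc A p q) : IsArc A q p := by
  obtain ⟨f, hc, hi, h0, h1, himg⟩ := h
  have hmaps : MapsTo (fun t : ℝ => 1 - t) (Icc 0 1) (Icc 0 1) := fun t ⟨h0, h1⟩ =>
    ⟨by linarith, by linarith⟩
  refine ⟨fun t => f (1 - t), hc.comp (continuous_const.sub continuous_id).continuousOn hmaps,
    hi.comp (fun a _ b _ hab => sub_right_injective hab) hmaps, by simpa using h1,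
    by simpa using h0, ?_⟩
  rw [← image_image f (fun t : ℝ => 1 - t), image_const_sub_Icc, sub_zero, sub_self, himg]

theorem exists_image_Ico_eq_diff_right (h : IsArc A p q) :
    ∃ f : ℝ → ℝ × ℝ, ContinuousOn f (Icc 0 1) ∧ f 0 = p ∧ f 1 = q ∧
      f '' Ico 0 1 = A \ {q} := by
  obtain ⟨f, hc, hi, h0, h1, himg⟩ := h
  refine ⟨f, hc, h0, h1, ?_⟩
  rw [← Icc_sdiff_right, hi.image_sdiff, himg, inter_eq_right.2 (by simp), image_singleton, h1]

theorem isPreconnected_diff_right (h : IsArc A p q) : IsPreconnected (A \ {q}) := by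
  obtain ⟨f, hc, -, -, hf⟩ := h.exists_image_Ico_eq_diff_right
  exact hf ▸ isPreconnected_Ico.image f (hc.mono Ico_subset_Icc_self)

theorem left_mem_diff_right (h : IsArc A p q) : p ∈ A \ {q} := by
  obtain ⟨f, -, h0, -, hf⟩ := h.exists_image_Ico_eq_diff_right
  exact hf ▸ h0 ▸ mem_image_of_mem f (left_mem_Ico.2 zero_lt_one)

theorem right_mem_closure_diff_right (h : IsArc A p q) : q ∈ closure (A \ {q}) := by
  obtain ⟨f, hc, -, h1, hf⟩ := h.exists_image_Ico_eq_diff_right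
  have h1cl : (1 : ℝ) ∈ closure (Ico 0 1) := by
    rw [closure_Ico zero_ne_one]
    exact right_mem_Icc.2 zero_le_one
  exact hf ▸ h1 ▸ ((hc 1 (right_mem_Icc.2 zero_le_one)).mono Ico_subset_Icc_self).mem_closure_image h1cl

end IsArc

namespace PlanarDrawing

variable {V : Type} {G : SimpleGraph V} (D : PlanarDrawing G)

theorem isArc_arc_of_adj {u v : V} (hadj : G.Adj u v) :
    IsArc (D.arc s(u, v)) (D.pos u) (D.pos v) := by
  obtain ⟨a, b, heq, harc⟩ := D.arc_isArc s(u, v) hadj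
  rcases Sym2.eq_iff.1 heq with ⟨rfl, rfl⟩ | ⟨rfl, rfl⟩
  · exact harc
  · exact harc.symm

theorem mem_restrict_drawnSet_iff {S : Set V} {x : ℝ × ℝ} :
    x ∈ (D.restrict S).drawnSet ↔
      (∃ v ∈ S, D.pos v = x) ∨ ∃ a ∈ S, ∃ b ∈ S, G.Adj a b ∧ x ∈ D.arc s(a, b) := by
  simp [drawnSet, restrict, Sym2.exists, and_left_comm]

theorem restrict_univ_drawnSet : (D.restrict univ).drawnSet = D.drawnSet := by
  ext x
  rw [mem_restrict_drawnSet_iff]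
  simp [drawnSet, Sym2.exists]

theorem restrict_drawnSet_mono {S T : Set V} (h : S ⊆ T) :
    (D.restrict S).drawnSet ⊆ (D.restrict T).drawnSet := by
  intro x hx
  rw [mem_restrict_drawnSet_iff] at hx ⊢
  rcases hx with ⟨v, hv, hx⟩ | ⟨a, ha, b, hb, hab, hx⟩
  · exact Or.inl ⟨v, h hv, hx⟩
  · exact Or.inr ⟨a, h ha, b, h hb, hab, hx⟩

theorem pos_notMem_restrict_drawnSet {S : Set V} {u : V} (hu : u ∉ S) :
    D.pos u ∉ (D.restrict S).drawnSet := by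
  rw [mem_restrict_drawnSet_iff]
  rintro (⟨v, hv, hx⟩ | ⟨a, ha, b, hb, hab, hx⟩)
  · exact hu (D.pos_inj hx ▸ hv)
  · rcases Sym2.mem_iff.1 (D.arc_pos s(a, b) hab u hx) with rfl | rfl <;> contradiction

theorem arc_diff_subset_compl_restrict_drawnSet {S : Set V} {u v : V} (hu : u ∉ S)
    (hadj : G.Adj u v) : D.arc s(u, v) \ {D.pos v} ⊆ (D.restrict S).drawnSetᶜ := by
  rintro y ⟨hy, hyv⟩ hyS
  have hvertex : ∀ w ∈ S, w ∈ s(u, v) → D.pos w ≠ y := by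
    intro w hw hwuv hwy
    rcases Sym2.mem_iff.1 hwuv with rfl | rfl
    · exact hu hw
    · exact hyv hwy.symm
  rcases (D.mem_restrict_drawnSet_iff).1 hyS with ⟨w, hw, hwy⟩ | ⟨a, ha, b, hb, hab, hy'⟩
  · exact hvertex w hw (D.arc_pos _ hadj w (hwy ▸ hy)) hwy
  · have hne : s(u, v) ≠ s(a, b) := fun h => by
      rcases Sym2.mem_iff.1 (h ▸ Sym2.mem_mk_left u v : u ∈ s(a, b)) with rfl | rfl <;>
        contradiction
    obtain ⟨w, ⟨hwuv, hwab⟩, hwy⟩ := D.arc_inter_arc _ hadj _ hab hne ⟨hy, hy'⟩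
    refine hvertex w ?_ hwuv hwy
    rcases Sym2.mem_iff.1 hwab with rfl | rfl <;> assumption

theorem onOuter_restrict_of_adj {S T : Set V} (hST : S ⊆ T) {u v : V} (huT : u ∈ T)
    (hu : u ∉ S) (hv : v ∈ S) (hadj : G.Adj u v) (houter : (D.restrict T).OnOuter ⟨u, huT⟩) :
    (D.restrict S).OnOuter ⟨v, hv⟩ := by
  obtain ⟨_, ⟨⟨x, -, rfl⟩, hunb⟩, hclu⟩ := houter
  have harc := D.isArc_arc_of_adj hadj
  have hupos := D.pos_notMem_restrict_drawnSet hu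
  set face := connectedComponentIn (D.restrict T).drawnSetᶜ x
  set U := insert (D.pos u) face ∪ (D.arc s(u, v) \ {D.pos v})
  have hUpre : IsPreconnected U :=
    (isPreconnected_connectedComponentIn.subset_closure (subset_insert _ _)
      (insert_subset hclu subset_closure)).union (D.pos u) (mem_insert _ _)
      harc.left_mem_diff_right harc.isPreconnected_diff_right
  have hUS : U ⊆ (D.restrict S).drawnSetᶜ :=
    union_subset (insert_subset hupos ((connectedComponentIn_subset _ _).trans
      (compl_subset_compl.2 (D.restrict_drawnSet_mono hST))))
      (D.arc_diff_subset_compl_restrict_drawnSet hu hadj)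
  have hU := hUpre.subset_connectedComponentIn (Or.inl (mem_insert _ _)) hUS
  refine ⟨_, ⟨⟨D.pos u, hupos, rfl⟩, fun hbdd => hunb (hbdd.subset ?_)⟩, ?_⟩
  · exact (subset_insert _ _).trans (subset_union_left.trans hU)
  · exact closure_mono (subset_union_right.trans hU) harc.right_mem_closure_diff_right

theorem remaining_antitone : Antitone D.remaining :=
  antitone_nat_of_succ_le fun _ => sdiff_subset

theorem notMem_remaining_one_of_onOuter {r : V} (hr : D.OnOuter r) : r ∉ D.remaining 1 := by
  obtain ⟨_, ⟨⟨x, hx, rfl⟩, hunb⟩, hcl⟩ := hr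
  rintro ⟨-, hpeel⟩
  rw [← restrict_univ_drawnSet] at hx hunb hcl
  exact hpeel ⟨trivial, _, ⟨⟨x, hx, rfl⟩, hunb⟩, hcl⟩

theorem exists_lt_mem_peel_of_notMem_remaining {u : V} {n : ℕ} (hu : u ∉ D.remaining n) :
    ∃ m < n, u ∈ D.peel m := by
  induction n with
  | zero => exact absurd trivial hu
  | succ n ih =>
    by_cases hn : u ∈ D.remaining n
    · exact ⟨n, n.lt_succ_self, not_not.1 fun hp => hu ⟨hn, hp⟩⟩
    · obtain ⟨m, hm, hpeel⟩ := ih hn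
      exact ⟨m, hm.trans n.lt_succ_self, hpeel⟩

theorem notMem_remaining_succ_of_adj {u v : V} {n : ℕ} (hadj : G.Adj u v)
    (hu : u ∉ D.remaining n) : v ∉ D.remaining (n + 1) := by
  rintro ⟨hv, hvpeel⟩
  obtain ⟨m, hm, huT, houter⟩ := D.exists_lt_mem_peel_of_notMem_remaining hu
  exact hvpeel ⟨hv, D.onOuter_restrict_of_adj (D.remaining_antitone hm.le) huT hu hv hadj houter⟩

theorem notMem_remaining_length_succ {v r : V} (p : G.Walk v r) (hr : D.OnOuter r) :
    v ∉ D.remaining (p.length + 1) := by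
  induction p with
  | nil => exact D.notMem_remaining_one_of_onOuter hr
  | cons hadj _ ih => exact D.notMem_remaining_succ_of_adj hadj.symm (ih hr)

end PlanarDrawing

theorem forest_dist_mem_early_peel_general {V : Type} (G : SimpleGraph V)
    (D : PlanarDrawing G) (F : SimpleGraph V)
    (hF : D.IsOuterRootedForest F)
    (v r : V) (i : ℕ) (hr : D.OnOuter r) (hreach : F.Reachable v r)
    (hdist : F.dist v r = i) :
    v ∉ D.remaining (i + 1) := by
  obtain ⟨p, hp⟩ := hreach.exists_walk_length_eq_dist
  simpa [hp, hdist] using D.notMem_remaining_length_succ (p.mapLe hF.1) hr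

/-- In an outer-face-rooted spanning forest of height `k - 1`, a vertex at
distance `i` from its root lies in one of the peels `L_1, …, L_{i+1}`, i.e. it
is removed after `i + 1` rounds of peeling. -/
theorem forest_dist_mem_early_peel {V : Type} (G : SimpleGraph V)
    (D : PlanarDrawing G) (F : SimpleGraph V) (k : ℕ)
    (hF : D.IsOuterRootedForest F) (hht : D.ForestHeightLE F (k - 1))
    (v r : V) (i : ℕ) (hr : D.OnOuter r) (hreach : F.Reachable v r)
    (hdist : F.dist v r = i) :
    v ∉ D.remaining (i + 1) :=
  forest_dist_mem_early_peel_general G D F hF v r i hr hreach hdist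
end

section
/- For any graph G, the treewidth tw(G) satisfies tw(G) ≤ max{1, ⌊(3/2)·bw(G)⌋ − 1}, where bw(G) denotes the branchwidth of G. -/
/-- A tree decomposition of a graph `G`: a tree of bags covering all vertices
and edges, such that the bags containing any fixed vertex form a subtree. -/
structure TreeDecomp {V : Type} (G : SimpleGraph V) : Type 1 where
  ι : Type
  T : SimpleGraph ι
  tree : T.IsTree
  bag : ι → Set V
  bag_finite : ∀ i, (bag i).Finite
  bag_vert : ∀ v : V, ∃ i, v ∈ bag i
  bag_edge : ∀ ⦃u v : V⦄, G.Adj u v → ∃ i, u ∈ bag i ∧ v ∈ bag i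
  bag_conn : ∀ v : V, (T.induce {i | v ∈ bag i}).Connected

/-- The width of a tree decomposition: maximum bag size minus one. -/
noncomputable def TreeDecomp.width {V : Type} {G : SimpleGraph V} (d : TreeDecomp G) : ℕ∞ :=
  ⨆ i : d.ι, ((d.bag i).ncard : ℕ∞) - 1

/-- The treewidth of a graph: the least width of a tree decomposition. -/
noncomputable def treewidth {V : Type} (G : SimpleGraph V) : ℕ∞ :=
  ⨅ d : TreeDecomp G, d.width

/-- A branch decomposition of `G`: a finite tree of maximum degree `3` whose
leaves are injectively labelled by the edges of `G`. -/
structure BranchDecomp {V : Type} (G : SimpleGraph V) : Type 1 where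
  ι : Type
  fin : Finite ι
  T : SimpleGraph ι
  tree : T.IsTree
  degree_le : ∀ i : ι, (T.neighborSet i).ncard ≤ 3
  leaf : G.edgeSet → ι
  leaf_inj : Function.Injective leaf
  leaf_isLeaf : ∀ e : G.edgeSet, (T.neighborSet (leaf e)).ncard ≤ 1

namespace BranchDecomp

variable {V : Type} {G : SimpleGraph V} (d : BranchDecomp G)

/-- A vertex `v` crosses the arc `{i, j}` of the decomposition tree if two edges
incident to `v` are assigned to leaves in different components of `T - {i, j}`. -/
def Crosses (v : V) (i j : d.ι) : Prop :=
  ∃ e₁ e₂ : G.edgeSet, v ∈ e₁.val ∧ v ∈ e₂.val ∧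
    (d.T.deleteEdges {s(i, j)}).Reachable (d.leaf e₁) i ∧
    (d.T.deleteEdges {s(i, j)}).Reachable (d.leaf e₂) j

/-- The width of a branch decomposition: the maximum, over arcs of the tree,
of the number of vertices crossing the arc. -/
noncomputable def width : ℕ∞ :=
  ⨆ i : d.ι, ⨆ j : d.ι, ⨆ _ : d.T.Adj i j, ({v : V | d.Crosses v i j}.ncard : ℕ∞)

end BranchDecomp

/-- The branchwidth of a graph: the least width of a branch decomposition. -/
noncomputable def branchwidth {V : Type} (G : SimpleGraph V) : ℕ∞ :=
  ⨅ d : BranchDecomp G, d.width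

/-!
Given a branch decomposition of width `w`, give each of its tree nodes `i` the bag of all
vertices `v` such that `i` lies on the tree path between two leaves carrying edges at `v`;
vertices without edges get bags of their own at new pendant nodes. The nodes whose bag contains
`v` span a subtree. A leaf's bag lies inside the edge at that leaf. Every vertex in the bag of
an internal node `i` crosses at least two of the at most three arcs at `i`, and each arc is
crossed by at most `w` vertices, so double counting gives `2 · |bag| ≤ 3w`.
-/

open SimpleGraph Sum

theorem Sym2.ncard_le_two_of_subset {α : Type*} {s : Set α} {z : Sym2 α} (h : s ⊆ z) :
    s.ncard ≤ 2 := by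
  induction z using Sym2.ind with
  | _ a b =>
    have hab : (s(a, b) : Set α) = {a, b} := by ext; simp
    rw [hab] at h
    exact (Set.ncard_le_ncard h).trans <| (Set.ncard_insert_le a {b}).trans (by simp)

namespace SimpleGraph

section Pendants

variable {ι β : Type*}

def addPendants (T : SimpleGraph ι) (att : β → ι) : SimpleGraph (ι ⊕ β) where
  Adj
    | inl a, inl b => T.Adj a b
    | inl a, inr x | inr x, inl a => att x = a
    | inr _, inr _ => False
  symm := ⟨by rintro (a | x) (b | y) h <;> first | exact h.symm | exact h⟩
  loopless := ⟨by rintro (a | x) h; exacts [T.loopless.irrefl a h, h]⟩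

variable {T : SimpleGraph ι} {att : β → ι}

@[simp] lemma addPendants_adj_inr_inl {a : ι} {x : β} :
    (T.addPendants att).Adj (inr x) (inl a) ↔ att x = a := .rfl

@[simp] lemma not_addPendants_adj_inr_inr {x y : β} :
    ¬(T.addPendants att).Adj (inr x) (inr y) := id

def addPendantsInl (T : SimpleGraph ι) (att : β → ι) : T →g T.addPendants att :=
  ⟨inl, id⟩

theorem Connected.addPendants (hT : T.Connected) (att : β → ι) :
    (T.addPendants att).Connected := by
  obtain ⟨a₀⟩ := hT.nonempty
  have hinl (b : ι) : (T.addPendants att).Reachable (inl a₀) (inl b) :=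
    (hT a₀ b).map (addPendantsInl T att)
  refine (connected_iff_exists_forall_reachable _).mpr ⟨inl a₀, ?_⟩
  rintro (b | x)
  · exact hinl b
  · exact (hinl (att x)).trans (Adj.reachable rfl)

theorem IsAcyclic.addPendants (hT : T.IsAcyclic) (att : β → ι) :
    (T.addPendants att).IsAcyclic := by
  have pendant_isBridge (x : β) : (T.addPendants att).IsBridge s(inr x, inl (att x)) := by
    refine isBridge_iff.mpr (not_reachable_of_neighborSet_left_eq_empty (by simp) ?_)
    ext (b | y) <;> simp [eq_comm]
  refine isAcyclic_iff_forall_adj_isBridge.mpr ?_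
  rintro (a | x) (b | y) h
  · -- Collapsing every pendant onto its attachment point turns walks into walks of `T`.
    refine isBridge_iff.mpr fun hr => isAcyclic_iff_forall_adj_isBridge.mp hT h ?_
    rw [reachable_iff_reflTransGen] at hr ⊢
    refine hr.lift' (Sum.elim id att) ?_
    rintro (c | z) (c' | z') ⟨hadj, hne⟩
    · exact .single ⟨hadj, by simpa using hne⟩
    · obtain rfl : att z' = c := hadj
      exact .refl
    · obtain rfl : att z = c' := hadj
      exact .refl
    · exact absurd hadj not_addPendants_adj_inr_inr
  · obtain rfl : att y = a := h
    rw [Sym2.eq_swap]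
    exact pendant_isBridge y
  · obtain rfl : att x = b := h
    exact pendant_isBridge x
  · exact absurd h not_addPendants_adj_inr_inr

theorem IsTree.addPendants (hT : T.IsTree) (att : β → ι) : (T.addPendants att).IsTree :=
  ⟨hT.connected.addPendants att, hT.isAcyclic.addPendants att⟩

end Pendants

variable {V W : Type*} {G : SimpleGraph V}

theorem Connected.induce_image {H : SimpleGraph W} (f : G →g H) {s : Set V}
    (hs : (G.induce s).Connected) : (H.induce (f '' s)).Connected :=
  hs.map ⟨fun (x : s) => ⟨f x, Set.mem_image_of_mem f x.2⟩, f.map_adj⟩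
    (by rintro ⟨_, x, hx, rfl⟩; exact ⟨⟨x, hx⟩, rfl⟩)

theorem connected_induce_singleton (v : V) : (G.induce {v}).Connected := by
  rw [induce_singleton_eq_top]
  exact connected_top

theorem mem_support_of_mem_edgeSet {e : Sym2 V} (he : e ∈ G.edgeSet) {v : V} (hv : v ∈ e) :
    v ∈ G.support := by
  induction e using Sym2.ind with
  | _ a b => rcases Sym2.mem_iff.mp hv with rfl | rfl; exacts [⟨b, he⟩, ⟨a, G.adj_symm he⟩]

theorem finite_support_of_finite_edgeSet (h : G.edgeSet.Finite) : G.support.Finite := by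
  classical
  refine (h.biUnion fun e _ => e.toFinset.finite_toSet).subset fun v hv => ?_
  obtain ⟨w, hvw⟩ := G.mem_support.mp hv
  exact Set.mem_biUnion (G.mem_edgeSet.mpr hvw) (by simp)

namespace Walk

variable {u v w : V}

theorem IsPath.reachable_deleteEdges_snd {p : G.Walk u v} (hp : p.IsPath) (hnil : ¬p.Nil) :
    (G.deleteEdges {s(u, p.snd)}).Reachable p.snd v := by
  cases p with
  | nil => exact absurd .nil hnil
  | cons h q =>
    have hu : u ∉ q.support := (cons_isPath_iff h q).mp hp |>.2
    rw [snd_cons]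
    exact (q.toDeleteEdge _ fun he => hu (q.fst_mem_support_of_mem_edges he)).reachable

theorem IsPath.reachable_deleteEdges_of_ne_snd {p : G.Walk u v} (hp : p.IsPath)
    (hw : w ≠ p.snd) : (G.deleteEdges {s(u, w)}).Reachable u v := by
  cases p with
  | nil => rfl
  | cons h q =>
    have hu : u ∉ q.support := (cons_isPath_iff h q).mp hp |>.2
    refine (Walk.toDeleteEdge _ (q.cons h) ?_).reachable
    rw [edges_cons, List.mem_cons, not_or]
    exact ⟨fun he => hw (by simpa using Sym2.congr_right.mp he),
      fun he => hu (q.fst_mem_support_of_mem_edges he)⟩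

end Walk

end SimpleGraph

theorem TreeDecomp.width_le_of_forall_ncard_le {V : Type} {G : SimpleGraph V} {d : TreeDecomp G}
    {n : ℕ} (h : ∀ i, (d.bag i).ncard ≤ n + 1) : d.width ≤ n :=
  iSup_le fun i => tsub_le_iff_right.mpr (by exact_mod_cast h i)

namespace BranchDecomp

variable {V : Type} {G : SimpleGraph V} (d : BranchDecomp G)

def bag (i : d.ι) : Set V :=
  {v | ∃ e₁ e₂ : G.edgeSet, v ∈ e₁.val ∧ v ∈ e₂.val ∧
    ∃ p : d.T.Walk (d.leaf e₁) (d.leaf e₂), p.IsPath ∧ i ∈ p.support}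

theorem finite_support (d : BranchDecomp G) : G.support.Finite :=
  have := d.fin
  finite_support_of_finite_edgeSet (Set.finite_coe_iff.mp (.of_injective d.leaf d.leaf_inj))

theorem bag_subset_support (i : d.ι) : d.bag i ⊆ G.support :=
  fun _ ⟨e, _, hv, _⟩ => mem_support_of_mem_edgeSet e.2 hv

theorem mem_bag_leaf {e : G.edgeSet} {v : V} (hv : v ∈ e.val) : v ∈ d.bag (d.leaf e) :=
  ⟨e, e, hv, hv, .nil, .nil, Walk.start_mem_support _⟩

theorem ncard_setOf_crosses_le {w : ℕ} (hw : d.width ≤ w) {i j : d.ι} (hij : d.T.Adj i j) :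
    {v | d.Crosses v i j}.ncard ≤ w := by
  have : ({v | d.Crosses v i j}.ncard : ℕ∞) ≤ d.width :=
    le_iSup_of_le i <| le_iSup_of_le j <| le_iSup_of_le hij le_rfl
  exact_mod_cast this.trans hw

theorem connected_induce_setOf_mem_bag {v : V} (hv : v ∈ G.support) :
    (d.T.induce {i | v ∈ d.bag i}).Connected := by
  obtain ⟨u, hvu⟩ := G.mem_support.mp hv
  set e₀ : G.edgeSet := ⟨s(v, u), hvu⟩
  have h₀ : v ∈ e₀.val := Sym2.mem_mk_left v u
  refine induce_connected_of_patches _ (d.mem_bag_leaf h₀) fun {x} hx => ?_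
  obtain ⟨e₁, e₂, h₁, h₂, p, hp, hx⟩ := hx
  obtain ⟨q, hq⟩ := (d.tree.existsUnique_path (d.leaf e₀) (d.leaf e₁)).exists
  have hqS : {y | y ∈ q.support} ⊆ {i | v ∈ d.bag i} := fun y hy => ⟨e₀, e₁, h₀, h₁, q, hq, hy⟩
  have hpS : {y | y ∈ p.support} ⊆ {i | v ∈ d.bag i} := fun y hy => ⟨e₁, e₂, h₁, h₂, p, hp, hy⟩
  refine ⟨_, Set.union_subset hqS hpS, Or.inl q.start_mem_support, Or.inr hx, ?_⟩
  exact (induce_union_connected q.connected_induce_support.preconnected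
    p.connected_induce_support.preconnected
    ⟨d.leaf e₁, q.end_mem_support, p.start_mem_support⟩).preconnected _ _

variable {d}

theorem exists_ne_crosses_of_mem_support {v : V} {e₁ e₂ : G.edgeSet} (h₁ : v ∈ e₁.val)
    (h₂ : v ∈ e₂.val) {p : d.T.Walk (d.leaf e₁) (d.leaf e₂)} (hp : p.IsPath) {i : d.ι}
    (hi : i ∈ p.support) (hi₁ : i ≠ d.leaf e₁) (hi₂ : i ≠ d.leaf e₂) :
    ∃ j j', j ≠ j' ∧ d.T.Adj i j ∧ d.T.Adj i j' ∧ d.Crosses v i j ∧ d.Crosses v i j' := by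
  obtain ⟨q, r, hq, hr, rfl⟩ := hp.mem_support_iff_exists_append.mp hi
  have hq' : ¬q.reverse.Nil := Walk.not_nil_of_ne hi₁
  have hr' : ¬r.Nil := Walk.not_nil_of_ne hi₂
  have hne : q.reverse.snd ≠ r.snd :=
    hp.ne_of_mem_support_of_append (r.adj_snd hr').ne' (by simp) (r.getVert_mem_support 1)
  refine ⟨q.reverse.snd, r.snd, hne, q.reverse.adj_snd hq', r.adj_snd hr', ?_, ?_⟩
  · exact ⟨e₂, e₁, h₂, h₁, (hr.reachable_deleteEdges_of_ne_snd hne).symm,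
      (hq.reverse.reachable_deleteEdges_snd hq').symm⟩
  · exact ⟨e₁, e₂, h₁, h₂, (hq.reverse.reachable_deleteEdges_of_ne_snd hne.symm).symm,
      (hr.reachable_deleteEdges_snd hr').symm⟩

theorem bag_subset_of_leaf_eq {e : G.edgeSet} {i : d.ι} (he : d.leaf e = i) :
    d.bag i ⊆ (e.val : Set V) := by
  rintro v ⟨e₁, e₂, h₁, h₂, p, hp, hi⟩
  by_cases hi₁ : i = d.leaf e₁
  · rwa [d.leaf_inj (he.trans hi₁)]
  by_cases hi₂ : i = d.leaf e₂
  · rwa [d.leaf_inj (he.trans hi₂)]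
  obtain ⟨j, j', hne, hj, hj', -⟩ := exists_ne_crosses_of_mem_support h₁ h₂ hp hi hi₁ hi₂
  have := d.fin
  have hleaf := he ▸ d.leaf_isLeaf e
  have htwo := (Set.one_lt_ncard (s := d.T.neighborSet i)).mpr ⟨j, hj, j', hj', hne⟩
  omega

theorem two_mul_ncard_bag_le {i : d.ι} (hi : ∀ e, d.leaf e ≠ i) {w : ℕ} (hw : d.width ≤ w) :
    2 * (d.bag i).ncard ≤ 3 * w := by
  classical
  have := d.fin
  have hbag := d.finite_support.subset (d.bag_subset_support i)
  have hnbr := Set.toFinite (d.T.neighborSet i)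
  set s := hbag.toFinset
  set t := hnbr.toFinset
  have hs : ∀ v ∈ s, 2 ≤ (t.bipartiteAbove (fun v j => d.Crosses v i j) v).card := by
    intro v hv
    obtain ⟨e₁, e₂, h₁, h₂, p, hp, hi'⟩ := hbag.mem_toFinset.mp hv
    obtain ⟨j, j', hne, hj, hj', hc, hc'⟩ :=
      exists_ne_crosses_of_mem_support h₁ h₂ hp hi' (hi e₁).symm (hi e₂).symm
    refine (Finset.card_pair hne).symm.le.trans (Finset.card_le_card ?_)
    intro k hk
    rcases Finset.mem_insert.mp hk with rfl | hk
    · simpa [t, Finset.bipartiteAbove] using ⟨hj, hc⟩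
    · rw [Finset.mem_singleton.mp hk]
      simpa [t, Finset.bipartiteAbove] using ⟨hj', hc'⟩
  have ht : ∀ j ∈ t, (s.bipartiteBelow (fun v j => d.Crosses v i j) j).card ≤ w := by
    intro j hj
    refine le_trans ?_ (d.ncard_setOf_crosses_le hw (hnbr.mem_toFinset.mp hj))
    rw [← Set.ncard_coe_finset]
    exact Set.ncard_le_ncard (by simp [Finset.bipartiteBelow])
      (d.finite_support.subset fun v ⟨e, _, hv, _⟩ => mem_support_of_mem_edgeSet e.2 hv)
  have hdeg : t.card ≤ 3 := by
    rw [← Set.ncard_eq_toFinset_card _]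
    exact d.degree_le i
  have hcount := Finset.card_mul_le_card_mul _ hs ht
  rw [← Set.ncard_eq_toFinset_card _ hbag] at hcount
  linarith [Nat.mul_le_mul_right w hdeg]

theorem ncard_bag_le {w : ℕ} (hw : d.width ≤ w) (i : d.ι) :
    (d.bag i).ncard ≤ max 2 (3 * w / 2) := by
  by_cases hi : ∃ e, d.leaf e = i
  · obtain ⟨e, he⟩ := hi
    exact le_max_of_le_left (Sym2.ncard_le_two_of_subset (bag_subset_of_leaf_eq he))
  · push Not at hi
    have := two_mul_ncard_bag_le hi hw
    omega

variable (d)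

noncomputable def toTreeDecomp : TreeDecomp G where
  ι := d.ι ⊕ V
  T := d.T.addPendants fun _ => d.tree.connected.nonempty.some
  tree := d.tree.addPendants _
  bag := Sum.elim d.bag fun u => {u} \ G.support
  bag_finite
    | inl i => d.finite_support.subset (d.bag_subset_support i)
    | inr u => (Set.finite_singleton u).sdiff
  bag_vert v := by
    by_cases hv : v ∈ G.support
    · obtain ⟨u, hvu⟩ := G.mem_support.mp hv
      exact ⟨inl (d.leaf ⟨s(v, u), hvu⟩), d.mem_bag_leaf (Sym2.mem_mk_left v u)⟩
    · exact ⟨inr v, rfl, hv⟩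
  bag_edge u v huv :=
    ⟨inl (d.leaf ⟨s(u, v), huv⟩), d.mem_bag_leaf (Sym2.mem_mk_left u v),
      d.mem_bag_leaf (Sym2.mem_mk_right u v)⟩
  bag_conn v := by
    by_cases hv : v ∈ G.support
    · have hS : {k | v ∈ Sum.elim d.bag (fun u => {u} \ G.support) k} =
          inl '' {i | v ∈ d.bag i} := by
        ext (i | u) <;> simp [hv]
      rw [hS]
      exact (d.connected_induce_setOf_mem_bag hv).induce_image (addPendantsInl _ _)
    · have hS : {k | v ∈ Sum.elim d.bag (fun u => {u} \ G.support) k} = {inr v} := by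
        ext (i | u)
        · simpa using fun h => hv (d.bag_subset_support i h)
        · simp [hv, eq_comm]
      rw [hS]
      exact connected_induce_singleton _

theorem width_toTreeDecomp_le {w : ℕ} (hw : d.width ≤ w) :
    d.toTreeDecomp.width ≤ ((max 1 (3 * w / 2 - 1) : ℕ) : ℕ∞) := by
  refine TreeDecomp.width_le_of_forall_ncard_le fun k => ?_
  rcases k with i | u
  · change (d.bag i).ncard ≤ _
    have := ncard_bag_le hw i
    omega
  · change ({u} \ G.support).ncard ≤ _
    have : ({u} \ G.support).ncard ≤ 1 :=
      (Set.ncard_le_ncard Set.sdiff_subset).trans (Set.ncard_singleton u).le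
    omega

end BranchDecomp

theorem exists_branchDecomp_width_le {V : Type} {G : SimpleGraph V} {w : ℕ}
    (h : branchwidth G ≤ w) : ∃ d : BranchDecomp G, d.width ≤ w := by
  have hw := ENat.lt_add_one_iff (m := branchwidth G) (ENat.natCast_ne_top w)
  obtain ⟨d, hd⟩ := iInf_lt_iff.mp (hw.mpr h)
  exact ⟨d, (ENat.lt_add_one_iff (ENat.natCast_ne_top w)).mp hd⟩

/-- `tw(G) ≤ max {1, ⌊(3/2) · bw(G)⌋ − 1}`. -/
theorem treewidth_le_of_branchwidth {V : Type} (G : SimpleGraph V)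
    (w : ℕ) (hbw : branchwidth G = (w : ℕ∞)) :
    treewidth G ≤ ((max 1 (3 * w / 2 - 1) : ℕ) : ℕ∞) := by
  obtain ⟨d, hd⟩ := exists_branchDecomp_width_le hbw.le
  exact (iInf_le _ d.toTreeDecomp).trans (d.width_toTreeDecomp_le hd)
end

section
/- The graph T_k consisting of k nested triangles, with consecutive triangles joined by a 6-cycle of edges, is 3-connected and, in the embedding with the outermost triangle as outer face, has exactly k onion peels, the i-th peel being the i-th triangle from the outside. -/
open Set Topology

/-- `k` nested triangles, consecutive ones joined by a 6-cycle: triangle `i`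
has vertices `(i, 0), (i, 1), (i, 2)`, and each vertex of triangle `i+1` is
joined to two vertices of triangle `i` (triangle `0` is the outermost one). -/
def nestedTriangles (k : ℕ) : SimpleGraph (Fin k × Fin 3) :=
  SimpleGraph.fromRel (fun x y =>
    (x.1 = y.1 ∧ x.2 ≠ y.2) ∨ (x.1.val + 1 = y.1.val ∧ (y.2 = x.2 ∨ y.2 = x.2 + 1)))

open Metric

/-!
Identify the plane with `ℂ` and draw `T_k` through `expMap (s, h) = exp (-h + 2πi s / 3)`: vertex
`c` of triangle `i` is the image of the lattice point `(c, i)`, triangle edges are images of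
horizontal unit segments (so triangle `i` is the whole circle of radius `e^{-i}`), and the 6-cycle
between triangles `i` and `i + 1` consists of images of vertical and diagonal unit segments.
Unit segments of this triangular lattice meet only at lattice points, and `expMap` only identifies
points whose columns differ by a multiple of `3`, so the drawing is planar.

After removing triangles `0, …, n - 1`, everything left is drawn in the closed disc of radius
`e^{-n}` and its boundary circle is drawn completely (it is triangle `n`). Hence the outer face is
the exterior of that circle, and the vertices on it are exactly those of triangle `n`.

For 3-connectivity: at most two deleted vertices miss a vertex of every triangle and one of the
three columns `(i, c), (i + 1, c)` between consecutive triangles; as each triangle is a clique,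
every surviving vertex is joined to the surviving part of triangle `0`.
-/

lemma Set.exists_disjoint_of_ncard_lt {ι α : Type*} [Finite ι] {A : ι → Set α}
    (hA : Pairwise (Function.onFun Disjoint A)) {s : Set α} (hs : s.Finite)
    (hcard : s.ncard < Nat.card ι) : ∃ i, Disjoint s (A i) := by
  by_contra! h
  choose f hfs hfA using fun i => not_disjoint_iff.mp (h i)
  have hinj : Function.Injective f := fun i j hij =>
    hA.eq (not_disjoint_iff.mpr ⟨f i, hfA i, hij ▸ hfA j⟩)
  have := Set.ncard_le_ncard_of_injOn (s := univ) f (fun i _ => hfs i) hinj.injOn hs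
  rw [Set.ncard_univ] at this
  omega

lemma Complex.isPreconnected_compl_closedBall_zero {r : ℝ} (hr : 0 < r) :
    IsPreconnected (closedBall (0 : ℂ) r)ᶜ := by
  have himage : Complex.exp '' {z | Real.log r < z.re} = (closedBall (0 : ℂ) r)ᶜ := by
    ext w
    simp only [mem_image, mem_ofPred_eq, mem_compl_iff, mem_closedBall, dist_zero_right, not_le]
    constructor
    · rintro ⟨z, hz, rfl⟩
      rw [Complex.norm_exp, ← Real.exp_log hr]
      exact Real.exp_lt_exp.mpr hz
    · intro hw
      have hw0 : w ≠ 0 := norm_pos_iff.mp (hr.trans hw)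
      exact ⟨Complex.log w, by rwa [Complex.log_re, Real.log_lt_log_iff hr (hr.trans hw)],
        Complex.exp_log hw0⟩
  rw [← himage]
  exact (convex_halfSpace_re_gt _).isPreconnected.image _ Complex.continuous_exp.continuousOn

namespace PlanarDrawing

variable {V : Type} {G : SimpleGraph V} (D : PlanarDrawing G)

lemma drawnSet_restrict_subset {S : Set V} {T : Set (ℝ × ℝ)} (hpos : ∀ v ∈ S, D.pos v ∈ T)
    (harc : ∀ e ∈ G.edgeSet, (∀ v ∈ e, v ∈ S) → D.arc e ⊆ T) :
    (D.restrict S).drawnSet ⊆ T := by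
  rintro p (⟨v, rfl⟩ | hp)
  · exact hpos v v.2
  · simp only [mem_iUnion] at hp
    obtain ⟨e, he, hpe⟩ := hp
    refine harc _ ?_ ?_ hpe
    · induction e using Sym2.ind with
      | _ a b => simpa using he
    · intro v hv
      obtain ⟨w, -, rfl⟩ := Sym2.mem_map.mp hv
      exact w.2

lemma arc_subset_drawnSet_restrict {S : Set V} {u v : V} (huv : G.Adj u v) (hu : u ∈ S)
    (hv : v ∈ S) : D.arc s(u, v) ⊆ (D.restrict S).drawnSet := fun _ hp =>
  Or.inr (mem_biUnion (x := s(⟨u, hu⟩, ⟨v, hv⟩)) (by simpa using huv) (by simpa [restrict] using hp))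

lemma pos_mem_image_sphere_of_onOuter {r : ℝ}
    (hsub : D.drawnSet ⊆ Complex.equivRealProdCLM '' closedBall 0 r)
    (hsph : Complex.equivRealProdCLM '' sphere 0 r ⊆ D.drawnSet) {v : V} (hv : D.OnOuter v) :
    D.pos v ∈ Complex.equivRealProdCLM '' sphere 0 r := by
  set E := Complex.equivRealProdCLM
  obtain ⟨F, ⟨⟨x, -, rfl⟩, hunbdd⟩, hvF⟩ := hv
  have hcover : D.drawnSetᶜ ⊆ E '' ball 0 r ∪ E '' (closedBall 0 r)ᶜ := by
    intro p hp
    obtain ⟨z, rfl⟩ := E.surjective p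
    rcases lt_trichotomy ‖z‖ r with h | h | h
    · exact Or.inl ⟨z, by simpa using h, rfl⟩
    · exact absurd (hsph ⟨z, by simpa using h, rfl⟩) hp
    · exact Or.inr ⟨z, by simpa using h, rfl⟩
  have hdisj : Disjoint (E '' ball 0 r) (E '' (closedBall 0 r)ᶜ) :=
    (disjoint_image_iff E.injective).mpr (disjoint_compl_right.mono_left ball_subset_closedBall)
  rcases isPreconnected_connectedComponentIn.subset_or_subset (E.isOpenMap _ isOpen_ball)
    (E.isOpenMap _ isClosed_closedBall.isOpen_compl) hdisj
    ((connectedComponentIn_subset _ _).trans hcover) with hin | hout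
  · exact absurd ((E.lipschitz.isBounded_image isBounded_ball).subset hin) hunbdd
  · have hvout : D.pos v ∈ E '' closure (closedBall 0 r)ᶜ :=
      E.image_closure _ ▸ closure_mono hout hvF
    rw [closure_compl, interior_closedBall'] at hvout
    obtain ⟨z, hz, hzv⟩ := hvout
    obtain ⟨z', hz', hz'v⟩ := hsub (Or.inl ⟨v, rfl⟩)
    obtain rfl := E.injective (hzv.trans hz'v.symm)
    rw [mem_compl_iff, mem_ball_zero_iff, not_lt] at hz
    exact ⟨z, mem_sphere_zero_iff_norm.mpr (le_antisymm (mem_closedBall_zero_iff.mp hz') hz), hzv⟩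

lemma onOuter_of_pos_mem_image_sphere {r : ℝ} (hr : 0 < r)
    (hsub : D.drawnSet ⊆ Complex.equivRealProdCLM '' closedBall 0 r) {v : V}
    (hv : D.pos v ∈ Complex.equivRealProdCLM '' sphere 0 r) : D.OnOuter v := by
  set E := Complex.equivRealProdCLM
  obtain ⟨z, hz, hzv⟩ := hv
  have hext : E '' (closedBall 0 r)ᶜ ⊆ D.drawnSetᶜ := by
    rintro _ ⟨w, hw, rfl⟩ hdrawn
    obtain ⟨w', hw', hww'⟩ := hsub hdrawn
    exact hw (E.injective hww' ▸ hw')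
  have hw : ((r + 1 : ℝ) : ℂ) ∈ (closedBall 0 r)ᶜ := by
    rw [mem_compl_iff, mem_closedBall_zero_iff, Complex.norm_real,
      Real.norm_of_nonneg (by linarith), not_le]
    linarith
  have hcomp := ((Complex.isPreconnected_compl_closedBall_zero hr).image E
    E.continuous.continuousOn).subset_connectedComponentIn (mem_image_of_mem E hw) hext
  refine ⟨_, ⟨⟨_, hext (mem_image_of_mem E hw), rfl⟩, fun hbdd => ?_⟩, closure_mono hcomp ?_⟩
  · have := (E.symm.lipschitz.isBounded_image (hbdd.subset hcomp)).union
      (isBounded_closedBall (x := (0 : ℂ)) (r := r))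
    rw [E.symm_image_image, compl_union_self] at this
    exact NormedSpace.unbounded_univ ℝ ℂ this
  · rw [← E.image_closure, closure_compl, interior_closedBall', ← hzv]
    exact mem_image_of_mem E (by simp [mem_sphere_zero_iff_norm.mp hz])

end PlanarDrawing

inductive LatticeDir
  | horiz
  | vert
  | diag

namespace LatticeDir

def ds : LatticeDir → ℕ
  | horiz => 1
  | vert => 0
  | diag => 1

def dh : LatticeDir → ℕ
  | horiz => 0
  | vert => 1
  | diag => 1

lemma exists_iff {p : LatticeDir → Prop} : (∃ d, p d) ↔ p horiz ∨ p vert ∨ p diag :=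
  ⟨fun ⟨d, hd⟩ => by cases d <;> simp [hd], by rintro (h | h | h) <;> exact ⟨_, h⟩⟩

end LatticeDir

def segPt (a : ℤ × ℤ) (d : LatticeDir) (t : ℝ) : ℝ × ℝ :=
  (a.1 + t * d.ds, a.2 + t * d.dh)

lemma eq_or_endpoints_of_intCast_add_eq {t t' : ℝ} (ht : t ∈ Icc (0 : ℝ) 1)
    (ht' : t' ∈ Icc (0 : ℝ) 1) {m m' : ℤ} (h : m + t = m' + t') :
    m = m' ∧ t = t' ∨ (t = 0 ∨ t = 1) ∧ (t' = 0 ∨ t' = 1) := by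
  obtain ⟨ht0, ht1⟩ := ht
  obtain ⟨ht0', ht1'⟩ := ht'
  have hup : ((m' - m : ℤ) : ℝ) ≤ 1 := by push_cast; linarith
  have hlo : ((m - m' : ℤ) : ℝ) ≤ 1 := by push_cast; linarith
  have hup' : m' - m ≤ 1 := by exact_mod_cast hup
  have hlo' : m - m' ≤ 1 := by exact_mod_cast hlo
  obtain rfl | rfl | rfl : m' = m - 1 ∨ m' = m ∨ m' = m + 1 := by omega
  all_goals push_cast at h
  · exact Or.inr ⟨Or.inl (by linarith), Or.inr (by linarith)⟩
  · exact Or.inl ⟨rfl, by linarith⟩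
  · exact Or.inr ⟨Or.inr (by linarith), Or.inl (by linarith)⟩

lemma segPt_eq_segPt {a a' : ℤ × ℤ} {d d' : LatticeDir} {t t' : ℝ} (ht : t ∈ Icc (0 : ℝ) 1)
    (ht' : t' ∈ Icc (0 : ℝ) 1) (h : segPt a d t = segPt a' d' t') :
    (t = 0 ∨ t = 1) ∧ (t' = 0 ∨ t' = 1) ∨ a = a' ∧ d = d' ∧ t = t' := by
  have hcoord : ∀ δ δ' : ℕ, δ ≤ 1 → δ' ≤ 1 → ∀ m m' : ℤ, (m : ℝ) + t * δ = m' + t' * δ' →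
      m = m' ∧ t * δ = t' * δ' ∨ (t * δ = 0 ∨ t * δ = 1) ∧ (t' * δ' = 0 ∨ t' * δ' = 1) := by
    intro δ δ' hδ hδ' m m' hm
    refine eq_or_endpoints_of_intCast_add_eq ?_ ?_ hm <;>
      [interval_cases δ; interval_cases δ'] <;> simp [ht.1, ht.2, ht'.1, ht'.2]
  obtain ⟨h1, h2⟩ := Prod.ext_iff.mp h
  have hx := hcoord d.ds d'.ds (by cases d <;> simp [LatticeDir.ds])
    (by cases d' <;> simp [LatticeDir.ds]) _ _ h1
  have hy := hcoord d.dh d'.dh (by cases d <;> simp [LatticeDir.dh])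
    (by cases d' <;> simp [LatticeDir.dh]) _ _ h2
  rw [Prod.ext_iff]
  cases d <;> cases d' <;> simp only [segPt, LatticeDir.ds, LatticeDir.dh] at hx hy h1 h2 <;>
    push_cast at hx hy h1 h2 <;>
    simp only [mul_one, mul_zero, add_zero, Int.cast_inj] at hx hy h1 h2 <;> grind

lemma exists_eq_add_add_three_mul (s : ℝ) :
    ∃ (c : Fin 3) (m : ℤ), ∃ t ∈ Icc (0 : ℝ) 1, s = c + t + 3 * m := by
  set r := s - 3 * ⌊s / 3⌋ with hr
  have hr0 : 0 ≤ r := by have := Int.floor_le (s / 3); linarith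
  have hr3 : r < 3 := by have := Int.lt_floor_add_one (s / 3); linarith
  have hc : ⌊r⌋₊ < 3 := (Nat.floor_lt hr0).mpr (by exact_mod_cast hr3)
  refine ⟨⟨⌊r⌋₊, hc⟩, ⌊s / 3⌋, r - ⌊r⌋₊, ⟨by linarith [Nat.floor_le hr0], ?_⟩, by simp [hr]⟩
  linarith [Nat.lt_floor_add_one r]

noncomputable def expMap (q : ℝ × ℝ) : ℂ :=
  Complex.exp (-q.2 + (2 * Real.pi / 3 * q.1 : ℝ) * Complex.I)

lemma continuous_expMap : Continuous expMap := by
  unfold expMap; fun_prop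

lemma norm_expMap (q : ℝ × ℝ) : ‖expMap q‖ = Real.exp (-q.2) := by
  simp [expMap, Complex.norm_exp]

lemma expMap_add_three_mul (s h : ℝ) (n : ℤ) : expMap (s + 3 * n, h) = expMap (s, h) := by
  rw [expMap, expMap, Complex.exp_eq_exp_iff_exists_int]
  exact ⟨n, by push_cast; ring⟩

lemma exists_eq_of_expMap_eq {q q' : ℝ × ℝ} (h : expMap q = expMap q') :
    ∃ n : ℤ, q = (q'.1 + 3 * n, q'.2) := by
  obtain ⟨n, hn⟩ := Complex.exp_eq_exp_iff_exists_int.mp h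
  have hre := congrArg Complex.re hn
  have him := congrArg Complex.im hn
  simp at hre him
  refine ⟨n, Prod.ext ?_ (by simpa using hre)⟩
  have hmul : (2 * Real.pi / 3) * (q.1 - (q'.1 + 3 * n)) = 0 := by linear_combination him
  simpa [Real.pi_ne_zero, sub_eq_zero] using hmul

lemma exists_expMap_eq {w : ℂ} (hw : w ≠ 0) : ∃ s, expMap (s, -Real.log ‖w‖) = w := by
  refine ⟨3 / (2 * Real.pi) * Complex.arg w, ?_⟩
  conv_rhs => rw [← Complex.exp_log hw]
  have harg : 2 * Real.pi / 3 * (3 / (2 * Real.pi) * Complex.arg w) = Complex.arg w := by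
    field_simp
  rw [expMap, Complex.log, harg]
  push_cast
  ring_nf

namespace NestedTriangles

variable {k : ℕ}

lemma adj_of_ne {i : Fin k} {a b : Fin 3} (h : a ≠ b) : (nestedTriangles k).Adj (i, a) (i, b) := by
  simp [nestedTriangles, h]

lemma adj_of_val_eq_succ {i j : Fin k} (h : j.val = i.val + 1) (c : Fin 3) :
    (nestedTriangles k).Adj (i, c) (j, c) := by
  simp [nestedTriangles, h, Fin.ext_iff]

theorem connected_induce_compl (hk : 1 ≤ k) {s : Set (Fin k × Fin 3)} (hs : s.ncard ≤ 2) :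
    ((nestedTriangles k).induce sᶜ).Connected := by
  set G := (nestedTriangles k).induce sᶜ
  have hcolumn : ∀ i j : Fin k, ∃ c, (i, c) ∉ s ∧ (j, c) ∉ s := by
    intro i j
    obtain ⟨c, hc⟩ := Set.exists_disjoint_of_ncard_lt (A := fun c => {(i, c), (j, c)})
      (fun c c' hcc' => by simp [Function.onFun, hcc'.symm]) s.toFinite (by simp; omega)
    exact ⟨c, by simpa using hc⟩
  have same_level : ∀ x y : ↥sᶜ, x.1.1 = y.1.1 → G.Reachable x y := by
    rintro ⟨⟨i, a⟩, hx⟩ ⟨⟨j, b⟩, hy⟩ (rfl : i = j)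
    by_cases hab : a = b
    · subst hab; rfl
    · exact SimpleGraph.Adj.reachable (adj_of_ne hab)
  have reach_top : ∀ (n : ℕ) (x : ↥sᶜ), x.1.1.val = n →
      ∃ y : ↥sᶜ, y.1.1.val = 0 ∧ G.Reachable x y := by
    intro n
    induction n with
    | zero => exact fun x hx => ⟨x, hx, .rfl⟩
    | succ n ih =>
      intro x hx
      obtain ⟨c, hic, hxc⟩ := hcolumn ⟨n, by omega⟩ x.1.1
      obtain ⟨y, hy0, hy⟩ := ih ⟨(⟨n, by omega⟩, c), hic⟩ rfl
      have hstep : G.Adj ⟨(x.1.1, c), hxc⟩ ⟨(⟨n, by omega⟩, c), hic⟩ :=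
        (adj_of_val_eq_succ hx c).symm
      exact ⟨y, hy0, (same_level x ⟨(x.1.1, c), hxc⟩ rfl).trans (hstep.reachable.trans hy)⟩
  obtain ⟨c, hc, -⟩ := hcolumn ⟨0, hk⟩ ⟨0, hk⟩
  have : Nonempty ↥sᶜ := ⟨⟨(⟨0, hk⟩, c), hc⟩⟩
  refine ⟨fun x y => ?_⟩
  obtain ⟨x', hx'0, hx⟩ := reach_top _ x rfl
  obtain ⟨y', hy'0, hy⟩ := reach_top _ y rfl
  exact hx.trans ((same_level x' y' (Fin.ext (hx'0.trans hy'0.symm))).trans hy.symm)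

def IsStep (u : Fin k × Fin 3) (d : LatticeDir) (v : Fin k × Fin 3) : Prop :=
  v.1.val = u.1.val + d.dh ∧ v.2.val = (u.2.val + d.ds) % 3

lemma adj_iff {u v : Fin k × Fin 3} :
    (nestedTriangles k).Adj u v ↔ ∃ d, IsStep u d v ∨ IsStep v d u := by
  obtain ⟨⟨i, hi⟩, a⟩ := u
  obtain ⟨⟨j, hj⟩, b⟩ := v
  simp only [nestedTriangles, SimpleGraph.fromRel_adj, IsStep, ne_eq, Prod.mk.injEq, Fin.mk.injEq,
    LatticeDir.exists_iff, LatticeDir.ds, LatticeDir.dh]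
  fin_cases a <;> fin_cases b <;> simp +decide <;> omega

lemma IsStep.ne {u v : Fin k × Fin 3} {d : LatticeDir} (h : IsStep u d v) : u ≠ v := by
  rintro rfl
  cases d <;> simp only [IsStep, LatticeDir.ds, LatticeDir.dh] at h <;> omega

lemma IsStep.right_unique {u v w : Fin k × Fin 3} {d : LatticeDir} (hv : IsStep u d v)
    (hw : IsStep u d w) : v = w :=
  Prod.ext (Fin.ext (hv.1.trans hw.1.symm)) (Fin.ext (hv.2.trans hw.2.symm))

lemma IsStep.unique {u v u' v' : Fin k × Fin 3} {d d' : LatticeDir} (h : IsStep u d v)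
    (h' : IsStep u' d' v') (he : s(u, v) = s(u', v')) : u = u' ∧ d = d' := by
  obtain ⟨h1, h2⟩ := h
  obtain ⟨h1', h2'⟩ := h'
  rcases Sym2.eq_iff.mp he with ⟨rfl, rfl⟩ | ⟨rfl, rfl⟩ <;>
    cases d <;> cases d' <;> simp only [LatticeDir.ds, LatticeDir.dh] at h1 h2 h1' h2' <;>
    simp only [true_and, reduceCtorEq, and_false, Prod.ext_iff, Fin.ext_iff] <;> omega

lemma exists_step_of_mem_edgeSet {e : Sym2 (Fin k × Fin 3)}
    (he : e ∈ (nestedTriangles k).edgeSet) : ∃ u v d, IsStep u d v ∧ s(u, v) = e := by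
  induction e using Sym2.ind with
  | _ x y =>
    obtain ⟨d, h | h⟩ := adj_iff.mp he
    · exact ⟨x, y, d, h, rfl⟩
    · exact ⟨y, x, d, h, Sym2.eq_swap⟩

def lat (x : Fin k × Fin 3) : ℤ × ℤ := (x.2.val, x.1.val)

noncomputable def pos (x : Fin k × Fin 3) : ℝ × ℝ :=
  Complex.equivRealProdCLM (expMap (x.2.val, x.1.val))

noncomputable def stepCurve (u : Fin k × Fin 3) (d : LatticeDir) (t : ℝ) : ℝ × ℝ :=
  Complex.equivRealProdCLM (expMap (segPt (lat u) d t))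

lemma continuous_stepCurve (u : Fin k × Fin 3) (d : LatticeDir) : Continuous (stepCurve u d) :=
  Complex.equivRealProdCLM.continuous.comp (continuous_expMap.comp (by unfold segPt; fun_prop))

lemma stepCurve_zero (u : Fin k × Fin 3) (d : LatticeDir) : stepCurve u d 0 = pos u := by
  simp [stepCurve, pos, segPt, lat]

lemma stepCurve_one {u v : Fin k × Fin 3} {d : LatticeDir} (h : IsStep u d v) :
    stepCurve u d 1 = pos v := by
  have hend : segPt (lat u) d 1 =
      ((v.2.val : ℝ) + 3 * (((u.2.val + d.ds) / 3 : ℕ) : ℤ), (v.1.val : ℝ)) := by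
    simp only [segPt, lat, one_mul, Prod.mk.injEq]
    constructor
    · rw [h.2]
      simp only [Int.cast_natCast]
      exact_mod_cast (Nat.mod_add_div (u.2.val + d.ds) 3).symm
    · rw [h.1]; push_cast; ring
  rw [stepCurve, hend, expMap_add_three_mul, pos]

lemma pos_injective : Function.Injective (pos (k := k)) := by
  intro u v h
  obtain ⟨n, hn⟩ := exists_eq_of_expMap_eq (Complex.equivRealProdCLM.injective h)
  simp only [Prod.mk.injEq, Nat.cast_inj] at hn
  have h2 : (u.2.val : ℤ) = v.2.val + 3 * n := by exact_mod_cast hn.1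
  exact Prod.ext (Fin.ext hn.2) (Fin.ext (by omega))

lemma stepCurve_eq_stepCurve {u u' : Fin k × Fin 3} {d d' : LatticeDir} {t t' : ℝ}
    (ht : t ∈ Icc (0 : ℝ) 1) (ht' : t' ∈ Icc (0 : ℝ) 1)
    (h : stepCurve u d t = stepCurve u' d' t') :
    (t = 0 ∨ t = 1) ∧ (t' = 0 ∨ t' = 1) ∨ u = u' ∧ d = d' ∧ t = t' := by
  obtain ⟨n, hn⟩ := exists_eq_of_expMap_eq (Complex.equivRealProdCLM.injective h)
  have hshift : segPt (lat u) d t = segPt (lat u' + (3 * n, 0)) d' t' := by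
    rw [hn]; simp only [segPt, Prod.fst_add, Prod.snd_add]; push_cast; ring_nf
  rcases segPt_eq_segPt ht ht' hshift with hends | ⟨hlat, rfl, rfl⟩
  · exact Or.inl hends
  · simp only [lat, Prod.ext_iff, Prod.fst_add, Prod.snd_add, add_zero, Nat.cast_inj] at hlat
    exact Or.inr ⟨Prod.ext (Fin.ext hlat.2) (Fin.ext (by omega)), rfl, rfl⟩

lemma stepCurve_eq_pos {u z : Fin k × Fin 3} {d : LatticeDir} {t : ℝ} (ht : t ∈ Icc (0 : ℝ) 1)
    (h : stepCurve u d t = pos z) : t = 0 ∨ t = 1 := by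
  rw [← stepCurve_zero z .horiz] at h
  rcases stepCurve_eq_stepCurve ht ⟨le_rfl, zero_le_one⟩ h with ⟨hends, -⟩ | ⟨-, -, rfl⟩
  exacts [hends, Or.inl rfl]

lemma exists_pos_eq_stepCurve {u v : Fin k × Fin 3} {d : LatticeDir} (h : IsStep u d v) {t : ℝ}
    (ht : t = 0 ∨ t = 1) : ∃ z ∈ s(u, v), pos z = stepCurve u d t := by
  rcases ht with rfl | rfl
  · exact ⟨u, Sym2.mem_mk_left u v, (stepCurve_zero u d).symm⟩
  · exact ⟨v, Sym2.mem_mk_right u v, (stepCurve_one h).symm⟩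

lemma stepCurve_injOn {u v : Fin k × Fin 3} {d : LatticeDir} (h : IsStep u d v) :
    InjOn (stepCurve u d) (Icc 0 1) := by
  have hne : stepCurve u d 0 ≠ stepCurve u d 1 := by
    rw [stepCurve_zero, stepCurve_one h]
    exact pos_injective.ne h.ne
  intro t ht t' ht' htt'
  rcases stepCurve_eq_stepCurve ht ht' htt' with ⟨rfl | rfl, rfl | rfl⟩ | ⟨-, -, rfl⟩
  exacts [rfl, absurd htt' hne, absurd htt'.symm hne, rfl, rfl]

/-- By `IsStep.unique`, the union has exactly one member when `e` is an edge. -/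
def arc (e : Sym2 (Fin k × Fin 3)) : Set (ℝ × ℝ) :=
  ⋃ (u) (v) (d) (_ : IsStep u d v ∧ s(u, v) = e), stepCurve u d '' Icc 0 1

lemma mem_arc {e : Sym2 (Fin k × Fin 3)} {p : ℝ × ℝ} :
    p ∈ arc e ↔
      ∃ u v d, (IsStep u d v ∧ s(u, v) = e) ∧ ∃ t ∈ Icc (0 : ℝ) 1, stepCurve u d t = p := by
  simp only [arc, mem_iUnion, mem_image, exists_prop]

lemma arc_eq {u v : Fin k × Fin 3} {d : LatticeDir} (h : IsStep u d v) :
    arc s(u, v) = stepCurve u d '' Icc 0 1 := by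
  ext p
  rw [mem_arc]
  constructor
  · rintro ⟨u', v', d', ⟨h', he⟩, hp⟩
    obtain ⟨rfl, rfl⟩ := h'.unique h he
    exact hp
  · exact fun hp => ⟨u, v, d, ⟨h, rfl⟩, hp⟩

noncomputable def drawing (k : ℕ) : PlanarDrawing (nestedTriangles k) where
  pos := pos
  pos_inj := pos_injective
  arc := arc
  arc_isArc := by
    intro e he
    obtain ⟨u, v, d, h, rfl⟩ := exists_step_of_mem_edgeSet he
    exact ⟨u, v, rfl, stepCurve u d, (continuous_stepCurve u d).continuousOn, stepCurve_injOn h,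
      stepCurve_zero u d, stepCurve_one h, (arc_eq h).symm⟩
  arc_inter_arc := by
    rintro e - f - hef p ⟨hpe, hpf⟩
    obtain ⟨u, v, d, ⟨h, rfl⟩, t, ht, rfl⟩ := mem_arc.mp hpe
    obtain ⟨u', v', d', ⟨h', rfl⟩, t', ht', hp⟩ := mem_arc.mp hpf
    rcases stepCurve_eq_stepCurve ht ht' hp.symm with ⟨hends, hends'⟩ | ⟨rfl, rfl, -⟩
    · obtain ⟨z, hz, hzp⟩ := exists_pos_eq_stepCurve h hends
      obtain ⟨z', hz', hz'p⟩ := exists_pos_eq_stepCurve h' hends'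
      obtain rfl := pos_injective (hzp.trans (hp.symm.trans hz'p.symm))
      exact ⟨z, ⟨hz, hz'⟩, hzp⟩
    · exact absurd (by rw [h.right_unique h']) hef
  arc_pos := by
    rintro e - z hz
    obtain ⟨u, v, d, ⟨h, rfl⟩, t, ht, hp⟩ := mem_arc.mp hz
    obtain ⟨z', hz', hz'p⟩ := exists_pos_eq_stepCurve h (stepCurve_eq_pos ht hp)
    rwa [← pos_injective (hz'p.trans hp)]

def levelsFrom (k n : ℕ) : Set (Fin k × Fin 3) := {x | n ≤ x.1.val}

open PlanarDrawing

lemma pos_mem_image_sphere_iff {v : Fin k × Fin 3} {n : ℕ} :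
    pos v ∈ Complex.equivRealProdCLM '' sphere 0 (Real.exp (-n)) ↔ v.1.val = n := by
  rw [pos, Complex.equivRealProdCLM.injective.mem_set_image, mem_sphere_zero_iff_norm, norm_expMap,
    Real.exp_eq_exp, neg_inj, Nat.cast_inj]

lemma drawnSet_restrict_levelsFrom_subset (n : ℕ) :
    ((drawing k).restrict (levelsFrom k n)).drawnSet ⊆
      Complex.equivRealProdCLM '' closedBall 0 (Real.exp (-n)) := by
  apply drawnSet_restrict_subset
  · intro v hv
    refine ⟨_, ?_, rfl⟩
    rw [mem_closedBall_zero_iff, norm_expMap, Real.exp_le_exp, neg_le_neg_iff]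
    dsimp only
    exact_mod_cast show n ≤ v.1.val from hv
  · rintro e - he p hp
    obtain ⟨u, v, d, ⟨h, rfl⟩, t, ht, rfl⟩ := mem_arc.mp hp
    have hu : (n : ℝ) ≤ u.1.val := by exact_mod_cast he u (Sym2.mem_mk_left u v)
    refine ⟨_, ?_, rfl⟩
    rw [mem_closedBall_zero_iff, norm_expMap, Real.exp_le_exp, neg_le_neg_iff]
    simp only [segPt, lat, Int.cast_natCast]
    nlinarith [ht.1, (Nat.cast_nonneg d.dh : (0 : ℝ) ≤ d.dh)]

lemma image_sphere_subset_drawnSet_restrict {n : ℕ} (hn : n < k) :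
    Complex.equivRealProdCLM '' sphere 0 (Real.exp (-n)) ⊆
      ((drawing k).restrict (levelsFrom k n)).drawnSet := by
  rintro _ ⟨w, hw, rfl⟩
  have hnorm : ‖w‖ = Real.exp (-n) := mem_sphere_zero_iff_norm.mp hw
  obtain ⟨s, hs⟩ := exists_expMap_eq (norm_ne_zero_iff.mp (hnorm ▸ (Real.exp_pos _).ne'))
  rw [hnorm, Real.log_exp, neg_neg] at hs
  obtain ⟨c, m, t, ht, rfl⟩ := exists_eq_add_add_three_mul s
  set u : Fin k × Fin 3 := (⟨n, hn⟩, c)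
  set v : Fin k × Fin 3 := (⟨n, hn⟩, c + 1)
  have h : IsStep u .horiz v := ⟨rfl, by simp [u, v, Fin.val_add, LatticeDir.ds]⟩
  refine arc_subset_drawnSet_restrict (drawing k) (adj_iff.mpr ⟨_, Or.inl h⟩)
    (by simp [levelsFrom, u]) (by simp [levelsFrom, v]) ?_
  change _ ∈ arc s(u, v)
  rw [arc_eq h]
  refine ⟨t, ht, ?_⟩
  rw [← hs, stepCurve, ← expMap_add_three_mul _ _ m]
  simp [segPt, lat, u, LatticeDir.ds, LatticeDir.dh]

lemma peelSet_levelsFrom {n : ℕ} (hn : n < k) :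
    (drawing k).peelSet (levelsFrom k n) = {x | x.1.val = n} := by
  ext v
  have hiff (hv : v ∈ levelsFrom k n) :
      ((drawing k).restrict (levelsFrom k n)).OnOuter ⟨v, hv⟩ ↔ v.1.val = n := by
    have hsub := drawnSet_restrict_levelsFrom_subset (k := k) n
    rw [← pos_mem_image_sphere_iff]
    exact ⟨((drawing k).restrict (levelsFrom k n)).pos_mem_image_sphere_of_onOuter hsub
      (image_sphere_subset_drawnSet_restrict hn) (v := ⟨v, hv⟩),
      ((drawing k).restrict (levelsFrom k n)).onOuter_of_pos_mem_image_sphere (Real.exp_pos _) hsub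
        (v := ⟨v, hv⟩)⟩
  simp only [peelSet, mem_ofPred_eq]
  exact ⟨fun ⟨hv, hout⟩ => (hiff hv).mp hout, fun hv => ⟨hv.ge, (hiff hv.ge).mpr hv⟩⟩

lemma remaining_eq_levelsFrom {n : ℕ} (hn : n ≤ k) :
    (drawing k).remaining n = levelsFrom k n := by
  induction n with
  | zero => ext; simp [remaining, levelsFrom]
  | succ n ih =>
    rw [remaining, ih (by omega), peelSet_levelsFrom (by omega)]
    ext
    simp only [levelsFrom, mem_sdiff, mem_ofPred_eq]
    omega

end NestedTriangles

/-- `T_k`, the graph of `k` nested triangles joined by 6-cycles, is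
3-connected (no separator of at most two vertices), and in the embedding with
the outermost triangle as outer face it has exactly `k` onion peels, the
`i`-th peel being the `i`-th triangle from the outside. -/
theorem nestedTriangles_threeConnected_peels (k : ℕ) (hk : 1 ≤ k) :
    (∀ s : Set (Fin k × Fin 3), s.ncard ≤ 2 →
      ((nestedTriangles k).induce (sᶜ : Set (Fin k × Fin 3))).Connected) ∧
    ∃ D : PlanarDrawing (nestedTriangles k),
      (∀ i : ℕ, i < k → D.peel i = {x : Fin k × Fin 3 | x.1.val = i}) ∧
      D.remaining k = ∅ := by
  refine ⟨fun s hs => NestedTriangles.connected_induce_compl hk hs, NestedTriangles.drawing k,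
    fun i hi => ?_, ?_⟩
  · rw [PlanarDrawing.peel, NestedTriangles.remaining_eq_levelsFrom hi.le,
      NestedTriangles.peelSet_levelsFrom hi]
  · rw [NestedTriangles.remaining_eq_levelsFrom le_rfl]
    exact eq_empty_of_forall_notMem fun x hx => (not_le.mpr x.1.isLt) hx
end
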